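/- Two nested logic programs P and Q are strongly equivalent if and only if they have the same SE-models. -/

import Mathlib

open scoped Classical

inductive Lit where
  | pos : ℕ → Lit
  | neg : ℕ → Lit
deriving DecidableEq

inductive Fml where
  | bot : Fml
  | top : Fml
  | lit : Lit → Fml
  | not : Fml → Fml
  | conj : Fml → Fml → Fml
  | disj : Fml → Fml → Fml
deriving DecidableEq

structure Rule where
  head : Fml
  body : Fml
deriving DecidableEq

abbrev Prog := Set Rule

/-- A set of literals is consistent if it contains no complementary pair. -/
def Consistent (X : Set Lit) : Prop :=
  ∀ a : ℕ, ¬ (Lit.pos a ∈ X ∧ Lit.neg a ∈ X)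

def Sat (X : Set Lit) : Fml → Prop
  | Fml.bot => False
  | Fml.top => True
  | Fml.lit l => l ∈ X
  | Fml.not F => ¬ Sat X F
  | Fml.conj F G => Sat X F ∧ Sat X G
  | Fml.disj F G => Sat X F ∨ Sat X G

def SatRule (X : Set Lit) (r : Rule) : Prop := Sat X r.body → Sat X r.head

def SatProg (X : Set Lit) (P : Prog) : Prop := ∀ r ∈ P, SatRule X r

/-- The reduct of a formula relative to X. -/
noncomputable def Reduct (X : Set Lit) : Fml → Fml
  | Fml.bot => Fml.bot
  | Fml.top => Fml.top
  | Fml.lit l => Fml.lit l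
  | Fml.not F => if Sat X F then Fml.bot else Fml.top
  | Fml.conj F G => Fml.conj (Reduct X F) (Reduct X G)
  | Fml.disj F G => Fml.disj (Reduct X F) (Reduct X G)

noncomputable def ReductRule (X : Set Lit) (r : Rule) : Rule :=
  ⟨Reduct X r.head, Reduct X r.body⟩

noncomputable def ReductProg (X : Set Lit) (P : Prog) : Prog :=
  ReductRule X '' P

/-- Y is an answer set for P: Y is minimal among consistent sets satisfying the reduct of P w.r.t. Y. -/
def AnswerSet (Y : Set Lit) (P : Prog) : Prop :=
  Consistent Y ∧ SatProg Y (ReductProg Y P) ∧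
    ∀ Z : Set Lit, Consistent Z → SatProg Z (ReductProg Y P) → Z ⊆ Y → Z = Y

def SEModel (P : Prog) (X Y : Set Lit) : Prop :=
  Consistent X ∧ Consistent Y ∧ X ⊆ Y ∧ SatProg Y P ∧ SatProg X (ReductProg Y P)

def StrongEq (P Q : Prog) : Prop :=
  ∀ R : Prog, ∀ Y : Set Lit, AnswerSet Y (P ∪ R) ↔ AnswerSet Y (Q ∪ R)

def Fml.negFree : Fml → Prop
  | Fml.bot => True
  | Fml.top => True
  | Fml.lit l => ∃ a, l = Lit.pos a
  | Fml.not F => F.negFree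
  | Fml.conj F G => F.negFree ∧ G.negFree
  | Fml.disj F G => F.negFree ∧ G.negFree

def ProgNegFree (P : Prog) : Prop := ∀ r ∈ P, r.head.negFree ∧ r.body.negFree

/-- The set of atoms (positive literals) in a set of literals. -/
def PosLits (Z : Set Lit) : Set Lit := {l ∈ Z | ∃ a, l = Lit.pos a}

def AtomsOnly (Z : Set Lit) : Prop := ∀ l ∈ Z, ∃ a, l = Lit.pos a

/-! An answer set of `P ∪ R` is the same thing as an SE-model `(Y, Y)` of `P` that is minimal
among the SE-models `(Z, Y)` of `P` with `Z ⊨ R^Y`; so programs with the same SE-models are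
strongly equivalent. Conversely, given an SE-model `(X, Y)` of `P`, adding the facts `Y`, respectively
the facts `X` together with all rules `p ← q` for `p, q ∈ Y \ X`, yields a program `R` whose reduct
`R^Y` has, below `Y`, exactly the models `Y`, respectively `X` and `Y`. Comparing the answer sets of
`P ∪ R` and `Q ∪ R` then forces `Y ⊨ Q` and `X ⊨ Q^Y`. -/

lemma sat_reduct_self (Y : Set Lit) (F : Fml) : Sat Y (Reduct Y F) ↔ Sat Y F := by
  induction F with
  | bot | top | lit => rfl
  | not F => by_cases h : Sat Y F <;> simp [Reduct, Sat, h]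
  | conj F G ihF ihG => exact and_congr ihF ihG
  | disj F G ihF ihG => exact or_congr ihF ihG

lemma satProg_reductProg_self (Y : Set Lit) (P : Prog) :
    SatProg Y (ReductProg Y P) ↔ SatProg Y P := by
  simp only [SatProg, ReductProg, Set.forall_mem_image, SatRule, ReductRule, sat_reduct_self]

lemma satProg_union (Z : Set Lit) (A B : Prog) :
    SatProg Z (A ∪ B) ↔ SatProg Z A ∧ SatProg Z B := by
  simp only [SatProg, Set.mem_union, or_imp, forall_and]

lemma reductProg_union (Y : Set Lit) (A B : Prog) :
    ReductProg Y (A ∪ B) = ReductProg Y A ∪ ReductProg Y B :=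
  Set.image_union _ _ _

lemma seModel_self_iff {P : Prog} {Y : Set Lit} : SEModel P Y Y ↔ Consistent Y ∧ SatProg Y P := by
  simp only [SEModel, satProg_reductProg_self, subset_rfl]
  tauto

lemma answerSet_union_iff {P R : Prog} {Y : Set Lit} :
    AnswerSet Y (P ∪ R) ↔ SEModel P Y Y ∧ SatProg Y (ReductProg Y R) ∧
      ∀ Z, SEModel P Z Y → SatProg Z (ReductProg Y R) → Z = Y := by
  simp only [AnswerSet, seModel_self_iff, reductProg_union, satProg_union,
    satProg_reductProg_self]
  constructor
  · rintro ⟨hY, ⟨hYP, hYR⟩, hmin⟩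
    exact ⟨⟨hY, hYP⟩, hYR, fun Z ⟨hZ, _, hZY, _, hZP⟩ hZR => hmin Z hZ ⟨hZP, hZR⟩ hZY⟩
  · rintro ⟨⟨hY, hYP⟩, hYR, hmin⟩
    exact ⟨hY, ⟨hYP, hYR⟩, fun Z hZ ⟨hZP, hZR⟩ hZY => hmin Z ⟨hZ, hY, hZY, hYP, hZP⟩ hZR⟩

lemma strongEq_of_seModel_iff {P Q : Prog} (h : ∀ X Y, SEModel P X Y ↔ SEModel Q X Y) :
    StrongEq P Q := by
  intro R Y
  simp only [answerSet_union_iff, h]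

lemma StrongEq.symm {P Q : Prog} (h : StrongEq P Q) : StrongEq Q P :=
  fun R Y => (h R Y).symm

def factsProg (X : Set Lit) : Prog :=
  (fun l => ⟨Fml.lit l, Fml.top⟩) '' X

def chainProg (S : Set Lit) : Prog :=
  Set.image2 (fun p q => ⟨Fml.lit p, Fml.lit q⟩) S S

lemma reductProg_factsProg (Y X : Set Lit) : ReductProg Y (factsProg X) = factsProg X := by
  rw [ReductProg, factsProg, Set.image_image]
  rfl

lemma reductProg_chainProg (Y S : Set Lit) : ReductProg Y (chainProg S) = chainProg S := by
  rw [ReductProg, chainProg, Set.image_image2]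
  rfl

lemma satProg_factsProg {Z X : Set Lit} : SatProg Z (factsProg X) ↔ X ⊆ Z := by
  simp [SatProg, factsProg, SatRule, Sat, Set.subset_def]

lemma satProg_chainProg {Z S : Set Lit} :
    SatProg Z (chainProg S) ↔ ∀ p ∈ S, ∀ q ∈ S, q ∈ Z → p ∈ Z := by
  simp only [SatProg, chainProg, Set.forall_mem_image2, SatRule, Sat]

lemma satProg_factsProg_union_chainProg_iff {X Y Z : Set Lit} (hXY : X ⊆ Y) (hZY : Z ⊆ Y) :
    SatProg Z (factsProg X ∪ chainProg (Y \ X)) ↔ Z = X ∨ Z = Y := by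
  rw [satProg_union, satProg_factsProg, satProg_chainProg]
  constructor
  · rintro ⟨hXZ, hchain⟩
    by_cases hZX : Z ⊆ X
    · exact Or.inl (hZX.antisymm hXZ)
    obtain ⟨q, hqZ, hqX⟩ := Set.not_subset.1 hZX
    refine Or.inr (hZY.antisymm fun p hpY => ?_)
    by_cases hpX : p ∈ X
    · exact hXZ hpX
    · exact hchain p ⟨hpY, hpX⟩ q ⟨hZY hqZ, hqX⟩ hqZ
  · rintro (rfl | rfl)
    · exact ⟨subset_rfl, fun _ _ q hq hqZ => absurd hqZ hq.2⟩
    · exact ⟨hXY, fun p hp _ _ _ => hp.1⟩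

lemma seModel_self_of_strongEq {P Q : Prog} (h : StrongEq P Q) {Y : Set Lit}
    (hPYY : SEModel P Y Y) : SEModel Q Y Y := by
  have hYfacts : SatProg Y (ReductProg Y (factsProg Y)) := by
    rw [reductProg_factsProg, satProg_factsProg]
  have hPY : AnswerSet Y (P ∪ factsProg Y) :=
    answerSet_union_iff.2 ⟨hPYY, hYfacts, fun Z hPZY hZ => by
      rw [reductProg_factsProg, satProg_factsProg] at hZ
      exact hPZY.2.2.1.antisymm hZ⟩
  exact (answerSet_union_iff.1 ((h _ Y).1 hPY)).1

lemma seModel_of_strongEq {P Q : Prog} (h : StrongEq P Q) {X Y : Set Lit}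
    (hPXY : SEModel P X Y) : SEModel Q X Y := by
  obtain ⟨hX, hY, hXY, hYP, hXP⟩ := hPXY
  have hQYY : SEModel Q Y Y := seModel_self_of_strongEq h (seModel_self_iff.2 ⟨hY, hYP⟩)
  refine ⟨hX, hY, hXY, hQYY.2.2.2.1, ?_⟩
  by_contra hXQ
  set R := factsProg X ∪ chainProg (Y \ X)
  have hR : ∀ Z, Z ⊆ Y → (SatProg Z (ReductProg Y R) ↔ Z = X ∨ Z = Y) := fun Z hZY => by
    rw [reductProg_union, reductProg_factsProg, reductProg_chainProg]
    exact satProg_factsProg_union_chainProg_iff hXY hZY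
  have hQY : AnswerSet Y (Q ∪ R) := by
    refine answerSet_union_iff.2 ⟨hQYY, (hR Y subset_rfl).2 (Or.inr rfl), fun Z hQZY hZ => ?_⟩
    obtain rfl | rfl := (hR Z hQZY.2.2.1).1 hZ
    · exact absurd hQZY.2.2.2.2 hXQ
    · rfl
  have hXeqY : X = Y := (answerSet_union_iff.1 ((h R Y).2 hQY)).2.2 X
    ⟨hX, hY, hXY, hYP, hXP⟩ ((hR X hXY).2 (Or.inl rfl))
  exact hXQ (hXeqY ▸ hQYY.2.2.2.2)

/-- Nested programs are strongly equivalent iff they have the same SE-models. -/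
theorem stmt4 (P Q : Prog) :
    StrongEq P Q ↔ ∀ X Y : Set Lit, SEModel P X Y ↔ SEModel Q X Y :=
  ⟨fun h _ _ => ⟨seModel_of_strongEq h, seModel_of_strongEq h.symm⟩, strongEq_of_seModel_iff⟩
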